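/- arXiv:2408.05072 — 2 statements merged into one kernel-verified Lean document; each statement's English description precedes it below -/
import Mathlib

section
/- Let C, C̃ ∈ ℝ^{n×n} be symmetric matrices with positive entries whose row-wise normalizations coincide (i.e. C(x,y)/m(x) = C̃(x,y)/m̃(x) for all x,y, where m = C·𝟏, m̃ = C̃·𝟏). Then there exists λ > 0 such that C = λ·C̃. -/
open Matrix Finset

theorem normalization_injective_up_to_scalar (n : ℕ)
    (C D : Matrix (Fin n) (Fin n) ℝ)
    (hCsym : C.IsSymm) (hCpos : ∀ x y, 0 < C x y)
    (hDsym : D.IsSymm) (hDpos : ∀ x y, 0 < D x y)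
    (h : ∀ x y, C x y / (∑ z, C x z) = D x y / (∑ z, D x z)) :
    ∃ l : ℝ, 0 < l ∧ C = l • D := by
  rcases n with _ | m
  · exact ⟨1, one_pos, by ext x y; exact x.elim0⟩
  have hmC : ∀ x, 0 < ∑ z, C x z := fun x =>
    Finset.sum_pos (fun z _ => hCpos x z) ⟨x, Finset.mem_univ x⟩
  have hmD : ∀ x, 0 < ∑ z, D x z := fun x =>
    Finset.sum_pos (fun z _ => hDpos x z) ⟨x, Finset.mem_univ x⟩
  set r : Fin (m + 1) → ℝ := fun x => (∑ z, C x z) / (∑ z, D x z) with hr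
  have hkey : ∀ x y, C x y = r x * D x y := by
    intro x y
    have := h x y
    rw [div_eq_div_iff (hmC x).ne' (hmD x).ne'] at this
    rw [hr]
    rw [div_mul_eq_mul_div, eq_div_iff (hmD x).ne']
    linarith
  have hconst : ∀ x y : Fin (m + 1), r x = r y := by
    intro x y
    have h1 : C x y = r x * D x y := hkey x y
    have h2 : C y x = r y * D y x := hkey y x
    have hCsym' : C x y = C y x := (hCsym.apply x y).symm
    have hDsym' : D y x = D x y := (hDsym.apply y x).symm
    have : r x * D x y = r y * D x y := by
      rw [← h1, hCsym', h2, hDsym']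
    exact mul_right_cancel₀ (hDpos x y).ne' this
  refine ⟨r 0, div_pos (hmC 0) (hmD 0), ?_⟩
  ext x y
  rw [Matrix.smul_apply, smul_eq_mul, hkey x y, hconst x 0]
end

section
/- Let G = (X, E) be a finite connected graph, and let a, b ∈ X be distinct vertices such that b has a neighbour other than a. Then for every x ∈ X \ {a,b} with d_G(b,x) ≤ d_G(a,x), there exists x' ∈ X \ {a,b} with x' adjacent to b (so d_G(b,x') = 1) and d_G(b,x)·d_G(a,x') ≥ d_G(b,x')·d_G(a,x), i.e. the ratio d_G(b,·)/d_G(a,·) over X\{a,b} is minimized at some neighbour of b. -/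
theorem ratio_minimized_at_neighbour (X : Type*) [Fintype X] (G : SimpleGraph X)
    (hconn : G.Connected) (a b : X) (hab : a ≠ b)
    (hnb : ∃ y, y ≠ a ∧ G.Adj b y)
    (x : X) (hxa : x ≠ a) (hxb : x ≠ b)
    (hle : G.dist b x ≤ G.dist a x) :
    ∃ x', x' ≠ a ∧ x' ≠ b ∧ G.Adj b x' ∧
      G.dist b x * G.dist a x' ≥ G.dist b x' * G.dist a x := by
  have hDpos : 0 < G.dist b x := hconn.pos_dist_of_ne (Ne.symm hxb)
  obtain ⟨p, hp⟩ := (hconn b x).exists_walk_length_eq_dist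
  cases p with
  | nil => simp at hp hDpos
  | @cons _ y _ h q =>
    simp only [SimpleGraph.Walk.length_cons] at hp
    have hyx : G.dist y x ≤ G.dist b x - 1 := by
      have := SimpleGraph.dist_le q
      omega
    have hya : y ≠ a := by
      rintro rfl
      omega
    have hyb : y ≠ b := fun e => G.irrefl (e ▸ h)
    have hby : G.dist b y = 1 := SimpleGraph.dist_eq_one_iff_adj.mpr h
    have htri : G.dist a x ≤ G.dist a y + G.dist y x := hconn.dist_triangle
    refine ⟨y, hya, hyb, h, ?_⟩
    rw [hby, one_mul]
    set D := G.dist b x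
    set A := G.dist a x
    have h1 : A ≤ G.dist a y + (D - 1) := le_trans htri (by omega)
    have h2 : D ≤ A := hle
    nlinarith [Nat.sub_add_cancel hDpos]
end
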